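/- arXiv:2003.00051 — 3 statements merged into one kernel-verified Lean document; each statement's English description precedes it below -/
import Mathlib

section
/- Let D ⊆ ℝ^d be a finite set written as a union D = D_1 ∪ D_2 ∪ ... ∪ D_m of finite subsets, let q ∈ ℝ^d be a query point, and let S = ⋃_{i=1}^m Skyline(D_i, q) be the union of the skylines of the parts. Then the dynamic skyline of D at q equals the dynamic skyline of S at q: Skyline(D, q) = Skyline(S, q). (This is the correctness of answering a skyline query by combining the results of the ⌈n/l⌉ generalized-tiling index structures.) -/
/-- `p` dominates `p'` with respect to query point `q`. -/
def dominates {d : ℕ} (q p p' : Fin d → ℝ) : Prop :=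
  (∀ i, |p i - q i| ≤ |p' i - q i|) ∧ (∃ i, |p i - q i| < |p' i - q i|)

/-- Dynamic skyline of `D` at query point `q`. -/
def skyline {d : ℕ} (D : Set (Fin d → ℝ)) (q : Fin d → ℝ) : Set (Fin d → ℝ) :=
  {p | p ∈ D ∧ ∀ p' ∈ D, ¬ dominates q p' p}

/-!
Measuring each point by its vector of coordinatewise distances to `q`, domination is the strict
product order on these vectors, and the skyline of a finite set consists of the points with
minimal distance vector; so every point of a finite set is weakly dominated by one of its skyline
points. Hence the union `S` of the skylines of the parts lies in `D`, contains the skyline of `D`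
(a skyline point of `D` is a skyline point of its own part) and weakly dominates every point of
`D`; any such subset of `D` has the same skyline as `D`.
-/

section Skyline

variable {d : ℕ} (q : Fin d → ℝ)

def distVec (p : Fin d → ℝ) : Fin d → ℝ := fun i => |p i - q i|

lemma dominates_iff_distVec_lt {p p' : Fin d → ℝ} :
    dominates q p p' ↔ distVec q p < distVec q p' :=
  Pi.lt_def.symm

lemma skyline_subset (A : Set (Fin d → ℝ)) : skyline A q ⊆ A := fun _ hp => hp.1

lemma mem_skyline_of_subset {A B : Set (Fin d → ℝ)} (hBA : B ⊆ A) {p : Fin d → ℝ}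
    (hp : p ∈ skyline A q) (hpB : p ∈ B) : p ∈ skyline B q :=
  ⟨hpB, fun p' hp' => hp.2 p' (hBA hp')⟩

lemma exists_mem_skyline_distVec_le {A : Set (Fin d → ℝ)} (hA : A.Finite) {p : Fin d → ℝ}
    (hp : p ∈ A) : ∃ s ∈ skyline A q, distVec q s ≤ distVec q p := by
  obtain ⟨_, hle, ⟨s, hsA, rfl⟩, hmin⟩ :=
    (hA.image (distVec q)).exists_le_minimal (Set.mem_image_of_mem _ hp)
  refine ⟨s, ⟨hsA, fun p' hp' hdom => ?_⟩, hle⟩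
  have hlt := (dominates_iff_distVec_lt q).mp hdom
  exact hlt.not_ge (hmin ⟨p', hp', rfl⟩ hlt.le)

lemma skyline_eq_of_forall_exists_distVec_le {S D : Set (Fin d → ℝ)} (hSD : S ⊆ D)
    (hskyline : skyline D q ⊆ S) (hcover : ∀ y ∈ D, ∃ s ∈ S, distVec q s ≤ distVec q y) :
    skyline D q = skyline S q := by
  refine subset_antisymm (fun p hp => mem_skyline_of_subset q hSD hp (hskyline hp)) ?_
  refine fun p hp => ⟨hSD hp.1, fun y hyD hyp => ?_⟩
  obtain ⟨s, hsS, hsy⟩ := hcover y hyD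
  exact hp.2 s hsS ((dominates_iff_distVec_lt q).mpr
    (hsy.trans_lt ((dominates_iff_distVec_lt q).mp hyp)))

end Skyline

theorem skyline_eq_skyline_union_of_part_skylines {d m : ℕ} (D : Set (Fin d → ℝ))
    (P : Fin m → Set (Fin d → ℝ)) (hfin : ∀ i, (P i).Finite)
    (hD : D = ⋃ i, P i) (q : Fin d → ℝ) :
    skyline D q = skyline (⋃ i, skyline (P i) q) q := by
  subst hD
  refine skyline_eq_of_forall_exists_distVec_le q
    (Set.iUnion_mono fun i => skyline_subset q (P i)) (fun p hp => ?_) (fun y hy => ?_)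
  · obtain ⟨i, hpi⟩ := Set.mem_iUnion.mp hp.1
    exact Set.mem_iUnion_of_mem i (mem_skyline_of_subset q (Set.subset_iUnion P i) hp hpi)
  · obtain ⟨i, hyi⟩ := Set.mem_iUnion.mp hy
    obtain ⟨s, hs, hsy⟩ := exists_mem_skyline_distVec_le q (hfin i) hyi
    exact ⟨s, Set.mem_iUnion_of_mem i hs, hsy⟩
end

section
/- Let D_E and D_V be disjoint finite sets and let e_1, ..., e_r (r ≥ 1) be distinct two-element subsets of D_V, with tiles T_i = D_E ∪ (D_V \ e_i). Then the aggregation of these tiles is cardinality-wise valid for k = 1, i.e., |T_1 ∪ ... ∪ T_r| ≤ 1 + min_i |T_i|, if and only if the sets e_1, ..., e_r have a common element (i.e., all the corresponding edges are incident on a common vertex). -/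
theorem aggregation_valid_iff_common_vertex {α : Type*} [DecidableEq α]
    (D_E D_V : Finset α) (hdisj : Disjoint D_E D_V)
    {r : ℕ} (hr : 0 < r) (e : Fin r → Finset α)
    (hsub : ∀ i, e i ⊆ D_V) (hcard : ∀ i, (e i).card = 2)
    (hdist : Function.Injective e) :
    ((Finset.univ.sup fun i => D_E ∪ (D_V \ e i)).card ≤
        1 + Finset.univ.inf' (Finset.univ_nonempty_iff.mpr ⟨⟨0, hr⟩⟩)
          (fun i => (D_E ∪ (D_V \ e i)).card))
      ↔ ∃ v, ∀ i, v ∈ e i := by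
  classical
  set i0 : Fin r := ⟨0, hr⟩ with hi0
  set J : Finset α := D_V.filter (fun v => ∀ i, v ∈ e i) with hJ
  have hJsub : J ⊆ D_V := Finset.filter_subset _ _
  have hdisj' : ∀ s : Finset α, s ⊆ D_V → Disjoint D_E s :=
    fun s hs => hdisj.mono_right hs
  have hV2 : 2 ≤ D_V.card := by
    rw [← hcard i0]; exact Finset.card_le_card (hsub i0)
  have hTcard : ∀ i, (D_E ∪ (D_V \ e i)).card = D_E.card + (D_V.card - 2) := by
    intro i
    rw [Finset.card_union_of_disjoint (hdisj' _ Finset.sdiff_subset),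
      Finset.card_sdiff_of_subset (hsub i), hcard i]
  have hinf : (Finset.univ.inf' (Finset.univ_nonempty_iff.mpr ⟨⟨0, hr⟩⟩)
      (fun i => (D_E ∪ (D_V \ e i)).card)) = D_E.card + (D_V.card - 2) := by
    rw [show (fun i => (D_E ∪ (D_V \ e i)).card)
        = fun _ : Fin r => D_E.card + (D_V.card - 2) from funext hTcard]
    exact Finset.inf'_const _ _
  have hsup : (Finset.univ.sup fun i => D_E ∪ (D_V \ e i)) = D_E ∪ (D_V \ J) := by
    ext v
    simp only [Finset.mem_sup, Finset.mem_union, Finset.mem_sdiff, hJ,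
      Finset.mem_filter, Finset.mem_univ, true_and]
    constructor
    · rintro ⟨i, h | ⟨hv, hvi⟩⟩
      · exact Or.inl h
      · exact Or.inr ⟨hv, fun h => hvi (h.2 i)⟩
    · rintro (h | ⟨hv, hnot⟩)
      · exact ⟨i0, Or.inl h⟩
      · have : ∃ i, v ∉ e i := by
          by_contra hc
          push_neg at hc
          exact hnot ⟨hv, hc⟩
        obtain ⟨i, hi⟩ := this
        exact ⟨i, Or.inr ⟨hv, hi⟩⟩
  have hsupcard : (Finset.univ.sup fun i => D_E ∪ (D_V \ e i)).card
      = D_E.card + (D_V.card - J.card) := by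
    rw [hsup, Finset.card_union_of_disjoint (hdisj' _ Finset.sdiff_subset),
      Finset.card_sdiff_of_subset hJsub]
  rw [hsupcard, hinf]
  constructor
  · intro h
    have hJne : J.Nonempty := by
      rw [Finset.nonempty_iff_ne_empty]
      intro hc
      rw [hc, Finset.card_empty] at h
      omega
    obtain ⟨v, hv⟩ := hJne
    rw [hJ, Finset.mem_filter] at hv
    exact ⟨v, hv.2⟩
  · rintro ⟨v, hv⟩
    have hvJ : v ∈ J := by
      rw [hJ, Finset.mem_filter]
      exact ⟨hsub i0 (hv i0), hv⟩
    have h1 : 1 ≤ J.card := Finset.card_pos.mpr ⟨v, hvJ⟩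
    have h2 : J.card ≤ D_V.card := Finset.card_le_card hJsub
    omega
end

section
/- Let G be a finite simple graph with nonempty edge set. Then the minimum cardinality of a vertex cover of G equals the minimum number m of classes in a partition of the edge set of G into m classes such that each class is a star, i.e., all edges in each class are incident on a common vertex. (This correspondence between aggregations of tiles and vertex covers is the combinatorial core of the NP-hardness reduction for the Tile Aggregation Problem.) -/
open Finset

/-- From a vertex cover we can build a star partition of the same or smaller size. -/
lemma coverToPartition {V : Type*} [Fintype V] [DecidableEq V]
    (G : SimpleGraph V) [DecidableRel G.Adj] (hE : G.edgeFinset.Nonempty)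
    (C : Finset V) (hC : ∀ e ∈ G.edgeFinset, ∃ v ∈ C, v ∈ e) :
    ∃ P : Finset (Finset (Sym2 V)), P.card ≤ C.card ∧
        (∀ s ∈ P, s.Nonempty) ∧
        (∀ s ∈ P, ∃ v, ∀ e ∈ s, v ∈ e) ∧
        (∀ s ∈ P, ∀ t ∈ P, s ≠ t → Disjoint s t) ∧
        P.sup id = G.edgeFinset := by
  classical
  obtain ⟨e0, he0⟩ := hE
  haveI : Nonempty V := ⟨(Quot.out e0).1⟩
  set f : Sym2 V → V := fun e =>
    if h : ∃ v, v ∈ C ∧ v ∈ e then h.choose else Classical.arbitrary V with hf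
  have hfspec : ∀ e ∈ G.edgeFinset, f e ∈ C ∧ f e ∈ e := by
    intro e he
    obtain ⟨v, hv, hve⟩ := hC e he
    have h : ∃ v, v ∈ C ∧ v ∈ e := ⟨v, hv, hve⟩
    simp only [hf, dif_pos h]
    exact h.choose_spec
  refine ⟨(G.edgeFinset.image f).image
      (fun w => G.edgeFinset.filter (fun e => f e = w)), ?_, ?_, ?_, ?_, ?_⟩
  · calc ((G.edgeFinset.image f).image _).card
        ≤ (G.edgeFinset.image f).card := Finset.card_image_le
      _ ≤ C.card := Finset.card_le_card (by
          intro w hw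
          obtain ⟨e, he, rfl⟩ := Finset.mem_image.mp hw
          exact (hfspec e he).1)
  · intro s hs
    obtain ⟨w, hw, rfl⟩ := Finset.mem_image.mp hs
    obtain ⟨e, he, hfe⟩ := Finset.mem_image.mp hw
    exact ⟨e, Finset.mem_filter.mpr ⟨he, hfe⟩⟩
  · intro s hs
    obtain ⟨w, hw, rfl⟩ := Finset.mem_image.mp hs
    refine ⟨w, fun e he => ?_⟩
    obtain ⟨he1, he2⟩ := Finset.mem_filter.mp he
    exact he2 ▸ (hfspec e he1).2
  · intro s hs t ht hst
    obtain ⟨w1, hw1, rfl⟩ := Finset.mem_image.mp hs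
    obtain ⟨w2, hw2, rfl⟩ := Finset.mem_image.mp ht
    have : w1 ≠ w2 := fun h => hst (by rw [h])
    refine Finset.disjoint_left.mpr fun e h1 h2 => ?_
    exact this ((Finset.mem_filter.mp h1).2.symm.trans (Finset.mem_filter.mp h2).2)
  · apply le_antisymm
    · refine Finset.sup_le fun s hs => ?_
      obtain ⟨w, hw, rfl⟩ := Finset.mem_image.mp hs
      exact Finset.filter_subset _ _
    · intro e he
      have hmem : (G.edgeFinset.filter (fun e' => f e' = f e)) ∈
          (G.edgeFinset.image f).image
            (fun w => G.edgeFinset.filter (fun e' => f e' = w)) :=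
        Finset.mem_image.mpr ⟨f e, Finset.mem_image.mpr ⟨e, he, rfl⟩, rfl⟩
      exact Finset.mem_of_subset (Finset.le_sup (f := id) hmem)
        (Finset.mem_filter.mpr ⟨he, rfl⟩)

/-- From a star partition we can build a vertex cover of the same or smaller size. -/
lemma partitionToCover {V : Type*} [Fintype V] [DecidableEq V]
    (G : SimpleGraph V) [DecidableRel G.Adj] (hE : G.edgeFinset.Nonempty)
    (P : Finset (Finset (Sym2 V)))
    (hstar : ∀ s ∈ P, ∃ v, ∀ e ∈ s, v ∈ e)
    (hsup : P.sup id = G.edgeFinset) :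
    ∃ C : Finset V, C.card ≤ P.card ∧ ∀ e ∈ G.edgeFinset, ∃ v ∈ C, v ∈ e := by
  classical
  obtain ⟨e0, he0⟩ := hE
  haveI : Nonempty V := ⟨(Quot.out e0).1⟩
  set g : Finset (Sym2 V) → V := fun s =>
    if h : ∃ v, ∀ e ∈ s, v ∈ e then h.choose else Classical.arbitrary V with hg
  refine ⟨P.image g, Finset.card_image_le, fun e he => ?_⟩
  rw [← hsup] at he
  obtain ⟨s, hs, hes⟩ := Finset.mem_sup.mp he
  have h : ∃ v, ∀ e ∈ s, v ∈ e := hstar s hs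
  refine ⟨g s, Finset.mem_image_of_mem g hs, ?_⟩
  have : g s = h.choose := by simp only [hg, dif_pos h]
  rw [this]
  exact h.choose_spec e hes

theorem min_vertex_cover_eq_min_star_partition {V : Type*} [Fintype V] [DecidableEq V]
    (G : SimpleGraph V) [DecidableRel G.Adj] (hE : G.edgeFinset.Nonempty) :
    sInf {n : ℕ | ∃ C : Finset V, C.card = n ∧
        ∀ e ∈ G.edgeFinset, ∃ v ∈ C, v ∈ e} =
    sInf {m : ℕ | ∃ P : Finset (Finset (Sym2 V)), P.card = m ∧
        (∀ s ∈ P, s.Nonempty) ∧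
        (∀ s ∈ P, ∃ v, ∀ e ∈ s, v ∈ e) ∧
        (∀ s ∈ P, ∀ t ∈ P, s ≠ t → Disjoint s t) ∧
        P.sup id = G.edgeFinset} := by
  classical
  set A := {n : ℕ | ∃ C : Finset V, C.card = n ∧ ∀ e ∈ G.edgeFinset, ∃ v ∈ C, v ∈ e}
    with hA
  set B := {m : ℕ | ∃ P : Finset (Finset (Sym2 V)), P.card = m ∧
        (∀ s ∈ P, s.Nonempty) ∧
        (∀ s ∈ P, ∃ v, ∀ e ∈ s, v ∈ e) ∧
        (∀ s ∈ P, ∀ t ∈ P, s ≠ t → Disjoint s t) ∧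
        P.sup id = G.edgeFinset} with hB
  have hAne : A.Nonempty := by
    refine ⟨(Finset.univ : Finset V).card, Finset.univ, rfl, fun e he => ?_⟩
    exact ⟨(Quot.out e).1, Finset.mem_univ _, Sym2.out_fst_mem e⟩
  have hBne : B.Nonempty := by
    obtain ⟨C, -, hC⟩ := Nat.sInf_mem hAne
    obtain ⟨P, hPcard, h1, h2, h3, h4⟩ := coverToPartition G hE C hC
    exact ⟨P.card, P, rfl, h1, h2, h3, h4⟩
  apply le_antisymm
  · obtain ⟨P, hPcard, h1, h2, h3, h4⟩ := Nat.sInf_mem hBne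
    obtain ⟨C, hCcard, hC⟩ := partitionToCover G hE P h2 h4
    calc sInf A ≤ C.card := Nat.sInf_le ⟨C, rfl, hC⟩
      _ ≤ P.card := hCcard
      _ = sInf B := hPcard
  · obtain ⟨C, hCcard, hC⟩ := Nat.sInf_mem hAne
    obtain ⟨P, hPcard, h1, h2, h3, h4⟩ := coverToPartition G hE C hC
    calc sInf B ≤ P.card := Nat.sInf_le ⟨P, rfl, h1, h2, h3, h4⟩
      _ ≤ C.card := hPcard
      _ = sInf A := hCcard
end
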